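/- arXiv:1609.00179 — 2 statements merged into one kernel-verified Lean document; each statement's English description precedes it below -/
import Mathlib

section
/- Define G : ℝ → ℝ by G(x) = log(1+x²) for x < 0 and G(x) = x² for x ≥ 0. Then its convex envelope satisfies G*(x) = 0 for x < 0 and G*(x) = x² for x ≥ 0; consequently Argmin(G*) = (−∞, 0], whereas co(Argmin(G)) = {0}. In particular the conclusion Argmin(G*) = co(Argmin(G)) fails for this coercive C² function G, for which liminf_{|x|→∞} G(x)/|x| = 0. -/
/-!
Every convex minorant `g` of `Gex` is nondecreasing: its slopes over `[y, x]` are bounded below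
by `(g x - Gex y) / (x - y)`, which tends to `0` as `y → -∞` because `log (1 + y²)` is sublinear.
Hence `g x ≤ g 0 ≤ Gex 0 = 0` for `x ≤ 0`, while `g x ≤ x²` for `x ≥ 0`; since `(max x 0)²` is
itself a convex minorant, it is the convex envelope. The envelope vanishes on all of `(-∞, 0]`,
whereas `Gex` vanishes only at `0`.
-/

open Filter

/-- The convex envelope of `G`: the pointwise supremum of all convex functions lying below
`G`. -/
noncomputable def convexEnvelope (G : ℝ → ℝ) : ℝ → ℝ :=
  fun x => sSup {v : ℝ | ∃ g : ℝ → ℝ,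
    ConvexOn ℝ Set.univ g ∧ (∀ y, g y ≤ G y) ∧ g x = v}

/-- The function `G(x) = log(1+x²)` for `x < 0`, `G(x) = x²` for `x ≥ 0`. -/
noncomputable def Gex : ℝ → ℝ :=
  fun x => if x < 0 then Real.log (1 + x ^ 2) else x ^ 2

open Set Topology

theorem convexEnvelope_apply_eq {G E : ℝ → ℝ} {x : ℝ} (hE : ConvexOn ℝ univ E)
    (hEG : ∀ y, E y ≤ G y) (hmax : ∀ g, ConvexOn ℝ univ g → (∀ y, g y ≤ G y) → g x ≤ E x) :
    convexEnvelope G x = E x :=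
  IsGreatest.csSup_eq ⟨⟨E, hE, hEG, rfl⟩, by rintro _ ⟨g, hg, hgG, rfl⟩; exact hmax g hg hgG⟩

theorem ConvexOn.monotone_of_tendsto_div_atBot {g G : ℝ → ℝ} (hg : ConvexOn ℝ univ g)
    (hgG : ∀ y, g y ≤ G y) (hG : Tendsto (fun y => G y / y) atBot (𝓝 0)) : Monotone g := by
  intro x z hxz
  rcases hxz.eq_or_lt with rfl | hxz
  · rfl
  have hslope : Tendsto (fun y => (g x - G y) / (x - y)) atBot (𝓝 0) := by
    have hinv : ∀ c : ℝ, Tendsto (fun y => c / y) atBot (𝓝 0) := fun c =>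
      tendsto_const_nhds.div_atBot tendsto_id
    have := ((hinv (g x)).sub hG).div ((hinv x).sub_const 1) (by norm_num)
    refine (this.congr' ?_).trans (by norm_num)
    filter_upwards [eventually_lt_atBot 0] with y hy
    simp only [Pi.div_apply]
    rw [div_sub_div_same, div_sub_one hy.ne, div_div_div_cancel_right₀ hy.ne]
  have hle : ∀ᶠ y in atBot, (g x - G y) / (x - y) ≤ (g z - g x) / (z - x) := by
    filter_upwards [eventually_lt_atBot x] with y hy
    calc (g x - G y) / (x - y) ≤ (g x - g y) / (x - y) :=
          div_le_div_of_nonneg_right (by linarith [hgG y]) (by linarith)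
      _ ≤ (g z - g x) / (z - x) := hg.slope_mono_adjacent (mem_univ _) (mem_univ _) hy hxz
  have := (le_div_iff₀ (sub_pos.2 hxz)).1 (le_of_tendsto hslope hle)
  linarith

theorem hasDerivAt_ite_lt {f g f' g' : ℝ → ℝ} {a : ℝ} (hf : ∀ x, HasDerivAt f (f' x) x)
    (hg : ∀ x, HasDerivAt g (g' x) x) (ha : f a = g a) (ha' : f' a = g' a) (x : ℝ) :
    HasDerivAt (fun y => if y < a then f y else g y) (if x < a then f' x else g' x) x := by
  rcases lt_trichotomy x a with hx | rfl | hx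
  · rw [if_pos hx]
    refine (hf x).congr_of_eventuallyEq ?_
    filter_upwards [Iio_mem_nhds hx] with y (hy : y < a)
    rw [if_pos hy]
  · rw [if_neg (lt_irrefl x), ← hasDerivWithinAt_univ, ← Iic_union_Ici]
    refine HasDerivWithinAt.union ?_ ?_
    · rw [← ha']
      refine (hf x).hasDerivWithinAt.congr (fun y hy => ?_) (by rw [if_neg (lt_irrefl x), ha])
      rcases (mem_Iic.1 hy).lt_or_eq with hy | rfl
      · rw [if_pos hy]
      · rw [if_neg (lt_irrefl _), ha]
    · exact (hg x).hasDerivWithinAt.congr (fun y hy => if_neg (not_lt.2 hy))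
        (if_neg (lt_irrefl x))
  · rw [if_neg (not_lt.2 hx.le)]
    refine (hg x).congr_of_eventuallyEq ?_
    filter_upwards [Ioi_mem_nhds hx] with y (hy : a < y)
    rw [if_neg (not_lt.2 hy.le)]

theorem contDiff_ite_lt {a : ℝ} {n : ℕ} {f g : ℝ → ℝ} (hf : ContDiff ℝ n f) (hg : ContDiff ℝ n g)
    (hfg : ∀ k ≤ n, iteratedDeriv k f a = iteratedDeriv k g a) :
    ContDiff ℝ n (fun x => if x < a then f x else g x) := by
  induction n generalizing f g with
  | zero =>
    refine contDiff_zero.2 (Continuous.if (fun x hx => ?_) hf.continuous hg.continuous)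
    rw [show {x : ℝ | x < a} = Iio a from rfl, frontier_Iio, mem_singleton_iff] at hx
    simpa [hx] using hfg 0 le_rfl
  | succ n ih =>
    push_cast at hf hg ⊢
    rw [contDiff_succ_iff_deriv] at hf hg ⊢
    have hderiv (x : ℝ) := hasDerivAt_ite_lt (fun y => (hf.1 y).hasDerivAt)
      (fun y => (hg.1 y).hasDerivAt) (by simpa using hfg 0 (by omega))
      (by simpa using hfg 1 (by omega)) x
    refine ⟨fun x => (hderiv x).differentiableAt, by simp, ?_⟩
    rw [show deriv _ = _ from funext fun x => (hderiv x).deriv]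
    exact ih hf.2.2 hg.2.2 fun k hk => by
      simpa only [iteratedDeriv_succ'] using hfg (k + 1) (by omega)

theorem tendsto_log_one_add_sq_div_atTop :
    Tendsto (fun y => Real.log (1 + y ^ 2) / y) atTop (𝓝 0) := by
  refine (Asymptotics.IsBigO.trans_isLittleO ?_ Real.isLittleO_log_id_atTop).tendsto_div_nhds_zero
  refine Asymptotics.IsBigO.of_bound 3 ?_
  filter_upwards [eventually_ge_atTop 2] with y hy
  rw [Real.norm_of_nonneg (Real.log_nonneg (by nlinarith)),
    Real.norm_of_nonneg (Real.log_nonneg (by linarith))]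
  calc Real.log (1 + y ^ 2) ≤ Real.log (y ^ 3) := Real.log_le_log (by positivity) (by nlinarith)
    _ = 3 * Real.log y := by rw [Real.log_pow]; norm_num

theorem liminf_eq_zero_of_nonneg_of_tendsto {α : Type*} {l l' : Filter α} [l'.NeBot]
    {u : α → ℝ} (hu : ∀ x, 0 ≤ u x) (hl : l' ≤ l) (h : Tendsto u l' (𝓝 0)) :
    liminf u l = 0 := by
  have hcobdd : l.IsCoboundedUnder (· ≥ ·) u := h.isCoboundedUnder_ge.mono (map_mono hl)
  refine le_antisymm ?_ (le_liminf_of_le hcobdd (Eventually.of_forall hu))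
  calc liminf u l ≤ liminf u l' :=
        liminf_le_liminf_of_le hl (isBoundedUnder_of ⟨0, hu⟩) h.isCoboundedUnder_ge
    _ = 0 := h.liminf_eq

theorem setOf_forall_le_eq_preimage_zero {α : Type*} {f : α → ℝ} (hf : ∀ x, 0 ≤ f x)
    {a : α} (ha : f a = 0) : {x | ∀ y, f x ≤ f y} = f ⁻¹' {0} := by
  ext x
  exact ⟨fun h => le_antisymm (ha ▸ h a) (hf x), fun h y => (mem_singleton_iff.1 h).trans_le (hf y)⟩

theorem Gex_of_neg {x : ℝ} (hx : x < 0) : Gex x = Real.log (1 + x ^ 2) := if_pos hx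

theorem Gex_of_nonneg {x : ℝ} (hx : 0 ≤ x) : Gex x = x ^ 2 := if_neg (not_lt.2 hx)

theorem Gex_zero : Gex 0 = 0 := by simp [Gex]

theorem Gex_pos {x : ℝ} (hx : x ≠ 0) : 0 < Gex x := by
  rcases hx.lt_or_gt with hx | hx
  · rw [Gex_of_neg hx]
    exact Real.log_pos (by nlinarith)
  · rw [Gex_of_nonneg hx.le]
    positivity

theorem Gex_nonneg (x : ℝ) : 0 ≤ Gex x := by
  rcases eq_or_ne x 0 with rfl | hx
  · rw [Gex_zero]
  · exact (Gex_pos hx).le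

theorem Gex_preimage_zero : Gex ⁻¹' {0} = {0} := by
  ext x
  exact ⟨fun h => by_contra fun hx => (Gex_pos hx).ne' h, fun h => (mem_singleton_iff.1 h) ▸ Gex_zero⟩

theorem tendsto_Gex_div_abs_atBot : Tendsto (fun y => Gex y / |y|) atBot (𝓝 0) := by
  refine (tendsto_log_one_add_sq_div_atTop.comp tendsto_neg_atBot_atTop).congr' ?_
  filter_upwards [eventually_lt_atBot 0] with y hy
  simp [Gex_of_neg hy, abs_of_neg hy]

theorem tendsto_Gex_div_atBot : Tendsto (fun y => Gex y / y) atBot (𝓝 0) := by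
  have h := tendsto_Gex_div_abs_atBot.neg
  rw [neg_zero] at h
  refine h.congr' ?_
  filter_upwards [eventually_lt_atBot 0] with y hy
  rw [abs_of_neg hy, div_neg, neg_neg]

theorem convexEnvelope_Gex : convexEnvelope Gex = fun x => max x 0 ^ 2 := by
  have hconvex : ConvexOn ℝ univ fun x : ℝ => max x 0 ^ 2 :=
    ((convexOn_id convex_univ).sup (convexOn_const 0 convex_univ)).pow
      (fun x _ => le_max_right x 0) 2
  funext x
  refine convexEnvelope_apply_eq hconvex (fun y => ?_) ?_
  · rcases lt_or_ge y 0 with hy | hy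
    · rw [max_eq_right hy.le, sq, zero_mul]
      exact Gex_nonneg y
    · rw [max_eq_left hy, Gex_of_nonneg hy]
  · intro g hg hgG
    rcases lt_or_ge x 0 with hx | hx
    · calc g x ≤ g 0 := hg.monotone_of_tendsto_div_atBot hgG tendsto_Gex_div_atBot hx.le
        _ ≤ Gex 0 := hgG 0
        _ = max x 0 ^ 2 := by rw [Gex_zero, max_eq_right hx.le, sq, zero_mul]
    · rw [max_eq_left hx, ← Gex_of_nonneg hx]
      exact hgG x

theorem contDiff_Gex : ContDiff ℝ 2 Gex := by
  have hlog (x : ℝ) :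
      HasDerivAt (fun x : ℝ => Real.log (1 + x ^ 2)) (2 * x / (1 + x ^ 2)) x := by
    simpa using ((hasDerivAt_pow 2 x).const_add 1).log (by positivity)
  have hlog' : HasDerivAt (fun x : ℝ => 2 * x / (1 + x ^ 2)) 2 0 :=
    (((hasDerivAt_id (0 : ℝ)).const_mul 2).div ((hasDerivAt_pow 2 (0 : ℝ)).const_add 1)
      (by norm_num)).congr_deriv (by norm_num)
  have hfg : ∀ k ≤ 2, iteratedDeriv k (fun x : ℝ => Real.log (1 + x ^ 2)) 0 =
      iteratedDeriv k (fun x : ℝ => x ^ 2) 0 := by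
    intro k hk
    interval_cases k
    · simp
    · simp [(hlog 0).deriv]
    · rw [iteratedDeriv_succ', iteratedDeriv_one, funext fun x => (hlog x).deriv, hlog'.deriv]
      simp
  exact_mod_cast contDiff_ite_lt (n := 2)
    ((contDiff_const.add (contDiff_id.pow 2)).log fun x => by positivity) (contDiff_id.pow 2) hfg

theorem tendsto_Gex_cobounded : Tendsto Gex (Bornology.cobounded ℝ) atTop := by
  rw [IsOrderBornology.cobounded_eq, tendsto_sup]
  constructor
  · refine (Real.tendsto_log_atTop.comp (tendsto_atTop_add_const_left _ 1
      ((tendsto_pow_atTop two_ne_zero).comp tendsto_neg_atBot_atTop))).congr' ?_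
    filter_upwards [eventually_lt_atBot 0] with y hy
    simp [Gex_of_neg hy]
  · refine (tendsto_pow_atTop two_ne_zero).congr' ?_
    filter_upwards [eventually_ge_atTop 0] with y hy
    rw [Gex_of_nonneg hy]

/-- For `Gex` as above: `Gex*(x) = 0` for `x < 0`, `Gex*(x) = x²` for
`x ≥ 0`; consequently `Argmin(Gex*) = (−∞,0]` while `co(Argmin(Gex)) = {0}`, so the
conclusion `Argmin(G*) = co(Argmin(G))` fails for this coercive `C²` function `Gex`, for
which `liminf_{|x|→∞} Gex(x)/|x| = 0`. -/
theorem stmt10 :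
    (∀ x : ℝ, x < 0 → convexEnvelope Gex x = 0) ∧
    (∀ x : ℝ, 0 ≤ x → convexEnvelope Gex x = x ^ 2) ∧
    {x : ℝ | ∀ y, convexEnvelope Gex x ≤ convexEnvelope Gex y} = Set.Iic 0 ∧
    convexHull ℝ {x : ℝ | ∀ y, Gex x ≤ Gex y} = {0} ∧
    {x : ℝ | ∀ y, convexEnvelope Gex x ≤ convexEnvelope Gex y}
      ≠ convexHull ℝ {x : ℝ | ∀ y, Gex x ≤ Gex y} ∧
    ContDiff ℝ 2 Gex ∧
    Filter.Tendsto Gex (Bornology.cobounded ℝ) Filter.atTop ∧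
    Filter.liminf (fun x : ℝ => Gex x / |x|) (Bornology.cobounded ℝ) = 0 := by
  have hargminEnv : {x : ℝ | ∀ y, convexEnvelope Gex x ≤ convexEnvelope Gex y} = Iic 0 := by
    rw [convexEnvelope_Gex,
      setOf_forall_le_eq_preimage_zero (f := fun x : ℝ => max x 0 ^ 2) (fun x => sq_nonneg _)
        (a := 0) (by simp)]
    ext x
    simp
  have hcoArgmin : convexHull ℝ {x : ℝ | ∀ y, Gex x ≤ Gex y} = {0} := by
    rw [setOf_forall_le_eq_preimage_zero Gex_nonneg Gex_zero, Gex_preimage_zero,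
      convexHull_singleton]
  refine ⟨fun x hx => ?_, fun x hx => ?_, hargminEnv, hcoArgmin, ?_, contDiff_Gex,
    tendsto_Gex_cobounded, ?_⟩
  · simp [convexEnvelope_Gex, hx.le]
  · simp [convexEnvelope_Gex, hx]
  · rw [hargminEnv, hcoArgmin]
    exact fun h => absurd (h.subset (show (-1 : ℝ) ∈ Iic 0 by norm_num)) (by norm_num)
  · exact liminf_eq_zero_of_nonneg_of_tendsto (fun x => div_nonneg (Gex_nonneg x) (abs_nonneg x))
      IsOrderBornology.atBot_le_cobounded tendsto_Gex_div_abs_atBot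
end

section
/- Let F : ℝ → ℝ be of class C² with F(t) > F(0) = 0 for all t ≠ 0 (i.e., Argmin(F) = {0}), liminf_{|t|→∞} F(t)/t² > 0, and F''(0) = 0. Define F̃(t) := min{F(t), F(−t)} and let H be the convex envelope of the function t ↦ F̃(√|t|). Then H is an even convex function, and the function φ : ℝ → ℝ given by φ(t) = H(t)/t for t ≠ 0 and φ(0) = 0 is continuous and strictly increasing on ℝ. -/
open Filter Real Set Topology Asymptotics

/-- The paper's `F̃`; `Hfun F` and `phiFun F` below are its `H` and `φ`. -/
noncomputable def Ftilde (F : ℝ → ℝ) : ℝ → ℝ := fun t => min (F t) (F (-t))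

noncomputable def Hfun (F : ℝ → ℝ) : ℝ → ℝ :=
  convexEnvelope (fun t => Ftilde F (Real.sqrt |t|))

noncomputable def phiFun (F : ℝ → ℝ) : ℝ → ℝ :=
  fun t => if t = 0 then 0 else Hfun F t / t

lemma isLittleO_sq_of_contDiff_two {F : ℝ → ℝ} (hF : ContDiff ℝ 2 F) (h0 : F 0 = 0)
    (h1 : deriv F 0 = 0) (h2 : iteratedDeriv 2 F 0 = 0) : F =o[𝓝 0] (· ^ 2) := by
  simpa [taylorWithinEval_succ, taylor_within_zero_eval, iteratedDerivWithin_univ, h0, h1, h2]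
    using taylor_isLittleO_univ (x₀ := 0) hF

lemma exists_pos_eventually_le_of_liminf_pos {α : Type*} {u : α → ℝ} {l : Filter α}
    (h : 0 < liminf u l) : ∃ δ > 0, ∀ᶠ x in l, δ ≤ u x := by
  rw [liminf_eq] at h
  have hne : {a | ∀ᶠ x in l, a ≤ u x}.Nonempty := by
    by_contra h'
    rw [not_nonempty_iff_eq_empty] at h'
    simp [h'] at h
  obtain ⟨δ, hδ, hδpos⟩ := exists_lt_of_lt_csSup hne h
  exact ⟨δ, hδpos, hδ⟩

section ConvexEnvelope

variable {G g g₀ : ℝ → ℝ}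

lemma le_convexEnvelope (hg : ConvexOn ℝ univ g) (hgG : g ≤ G) (x : ℝ) :
    g x ≤ convexEnvelope G x :=
  le_csSup ⟨G x, by rintro v ⟨g, -, hgG, rfl⟩; exact hgG x⟩ ⟨g, hg, hgG, rfl⟩

lemma convexEnvelope_le (hg₀ : ConvexOn ℝ univ g₀) (hg₀G : g₀ ≤ G) :
    convexEnvelope G ≤ G := fun x =>
  csSup_le ⟨g₀ x, g₀, hg₀, hg₀G, rfl⟩ (by rintro v ⟨g, -, hgG, rfl⟩; exact hgG x)

lemma convexOn_convexEnvelope (hg₀ : ConvexOn ℝ univ g₀) (hg₀G : g₀ ≤ G) :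
    ConvexOn ℝ univ (convexEnvelope G) := by
  refine ⟨convex_univ, fun x _ y _ a b ha hb hab => ?_⟩
  refine csSup_le ⟨_, g₀, hg₀, hg₀G, rfl⟩ ?_
  rintro v ⟨g, hg, hgG, rfl⟩
  calc g (a • x + b • y) ≤ a • g x + b • g y := hg.2 trivial trivial ha hb hab
    _ ≤ a • convexEnvelope G x + b • convexEnvelope G y := by
      gcongr <;> exact le_convexEnvelope hg hgG _

lemma convexEnvelope_neg (hg₀ : ConvexOn ℝ univ g₀) (hg₀G : g₀ ≤ G) (hG : ∀ x, G (-x) = G x)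
    (x : ℝ) :
    convexEnvelope G (-x) = convexEnvelope G x := by
  have reflect : ∀ y, convexEnvelope G (-y) ≤ convexEnvelope G y := fun y =>
    le_convexEnvelope (g := fun z => convexEnvelope G (-z))
      ((convexOn_convexEnvelope hg₀ hg₀G).comp_linearMap (-LinearMap.id))
      (fun z => (convexEnvelope_le hg₀ hg₀G (-z)).trans_eq (hG z)) y
  exact (reflect x).antisymm (by simpa using reflect (-x))

lemma convexOn_max_zero_mul_sub (α c : ℝ) :
    ConvexOn ℝ univ (fun x => max 0 (α * (x - c))) := by
  refine (convexOn_const 0 convex_univ).sup ⟨convex_univ, fun x _ y _ a b _ _ hab => ?_⟩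
  simp only [smul_eq_mul]
  linear_combination (α * c) * hab

lemma convexEnvelope_pos (hG : 0 ≤ G) (hGc : ContinuousOn G (Ioi 0))
    (hGpos : ∀ x, 0 < x → 0 < G x) {δ : ℝ} (hδ : 0 < δ) (hlin : ∀ᶠ x in atTop, δ * x ≤ G x)
    {b : ℝ} (hb : 0 < b) : 0 < convexEnvelope G b := by
  obtain ⟨N, hN⟩ := eventually_atTop.mp hlin
  set T := max N b
  have hbT : b / 2 < T := by linarith [le_max_right N b]
  obtain ⟨z, hz, hzmin⟩ := isCompact_Icc.exists_isMinOn (nonempty_Icc.mpr hbT.le)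
    (hGc.mono fun x hx => (half_pos hb).trans_le hx.1)
  have hm : 0 < G z := hGpos z ((half_pos hb).trans_le hz.1)
  -- `α` is small enough for the ramp to stay below `G` on `[b/2, T]` and beyond `N`.
  set α := min δ (G z / (T - b / 2))
  have hα : 0 < α := lt_min hδ (div_pos hm (by linarith))
  have hramp : (fun x => max 0 (α * (x - b / 2))) ≤ G := by
    intro x
    refine max_le (hG x) ?_
    rcases le_or_gt x (b / 2) with hx | hx
    · have hGx : 0 ≤ G x := hG x
      linarith [mul_nonpos_of_nonneg_of_nonpos hα.le (by linarith : x - b / 2 ≤ 0)]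
    rcases le_or_gt x T with hxT | hxT
    · calc α * (x - b / 2) ≤ G z / (T - b / 2) * (T - b / 2) := by
            gcongr
            exact min_le_right _ _
        _ = G z := div_mul_cancel₀ _ (by linarith)
        _ ≤ G x := hzmin ⟨hx.le, hxT⟩
    · calc α * (x - b / 2) ≤ δ * x := by nlinarith [min_le_left δ (G z / (T - b / 2))]
        _ ≤ G x := hN x ((le_max_left N b).trans hxT.le)
  calc 0 < max 0 (α * (b - b / 2)) := lt_max_of_lt_right (by nlinarith)
    _ ≤ convexEnvelope G b := le_convexEnvelope (convexOn_max_zero_mul_sub α _) hramp b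

end ConvexEnvelope

lemma ConvexOn.continuous_div_self {f : ℝ → ℝ} (hf : ConvexOn ℝ univ f)
    (hlim : Tendsto (fun t => f t / t) (𝓝 0) (𝓝 0)) : Continuous fun t => f t / t := by
  have hfc : Continuous f := continuousOn_univ.mp (by simpa using hf.continuousOn_interior)
  refine continuous_iff_continuousAt.mpr fun x => ?_
  rcases eq_or_ne x 0 with rfl | hx
  · simpa [ContinuousAt] using hlim
  · exact hfc.continuousAt.div continuousAt_id hx

lemma ConvexOn.strictMonoOn_div_self {f : ℝ → ℝ} (hf : ConvexOn ℝ univ f) (hf0 : f 0 = 0)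
    (hpos : ∀ t, 0 < t → 0 < f t) (hlim : Tendsto (fun t => f t / t) (𝓝[>] 0) (𝓝 0)) :
    StrictMonoOn (fun t => f t / t) (Ici 0) := by
  intro s hs t ht hst
  rcases (mem_Ici.mp hs).eq_or_lt with rfl | hs
  · simpa using div_pos (hpos t hst) hst
  have ht : 0 < t := hs.trans hst
  have hle : f s / s ≤ f t / t := by
    simpa [hf0] using hf.secant_mono trivial trivial trivial hs.ne' ht.ne' hst.le
  refine hle.lt_of_ne fun heq => ?_
  set c := f t / t
  have hfs : f s = c * s := by rw [← heq, div_mul_cancel₀ _ hs.ne']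
  have hft : f t = c * t := by rw [div_mul_cancel₀ _ ht.ne']
  -- Left of `s`, the graph of `f` lies above the line through `(s, c s)` and `(t, c t)`.
  have habove : ∀ u ∈ Ioo 0 s, c ≤ f u / u := by
    intro u hu
    have hslope := hf.slope_mono_adjacent trivial trivial hu.2 hst
    rw [hfs, hft, show (c * t - c * s) / (t - s) = c by field_simp [(sub_pos.mpr hst).ne'],
      div_le_iff₀ (sub_pos.mpr hu.2)] at hslope
    rw [le_div_iff₀ hu.1]
    linarith
  have hc : c ≤ 0 := ge_of_tendsto hlim (eventually_of_mem (Ioo_mem_nhdsGT hs) habove)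
  exact hc.not_gt (div_pos (hpos t ht) ht)

section Envelope

variable {F : ℝ → ℝ}

lemma Ftilde_nonneg (hF : 0 ≤ F) : 0 ≤ Ftilde F := fun t => le_min (hF t) (hF (-t))

lemma Ftilde_sqrt_abs_nonneg (hF : 0 ≤ F) : 0 ≤ fun t => Ftilde F √|t| :=
  fun t => Ftilde_nonneg hF √|t|

lemma Hfun_le (hF : 0 ≤ F) : Hfun F ≤ fun t => Ftilde F √|t| :=
  convexEnvelope_le (convexOn_const 0 convex_univ) (Ftilde_sqrt_abs_nonneg hF)

lemma Hfun_nonneg (hF : 0 ≤ F) : 0 ≤ Hfun F :=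
  le_convexEnvelope (convexOn_const 0 convex_univ) (Ftilde_sqrt_abs_nonneg hF)

lemma convexOn_Hfun (hF : 0 ≤ F) : ConvexOn ℝ univ (Hfun F) :=
  convexOn_convexEnvelope (convexOn_const 0 convex_univ) (Ftilde_sqrt_abs_nonneg hF)

lemma Hfun_neg (hF : 0 ≤ F) (t : ℝ) : Hfun F (-t) = Hfun F t :=
  convexEnvelope_neg (convexOn_const 0 convex_univ) (Ftilde_sqrt_abs_nonneg hF)
    (fun t => by rw [abs_neg]) t

lemma Hfun_zero (hF : 0 ≤ F) (hF0 : F 0 = 0) : Hfun F 0 = 0 :=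
  le_antisymm (by simpa [Ftilde, hF0] using Hfun_le hF 0) (Hfun_nonneg hF 0)

lemma eventually_mul_le_Ftilde_sqrt {δ : ℝ} (hδ : ∀ᶠ s in atBot ⊔ atTop, δ ≤ F s / s ^ 2) :
    ∀ᶠ t in atTop, δ * t ≤ Ftilde F √|t| := by
  rw [eventually_sup] at hδ
  filter_upwards [tendsto_sqrt_atTop.eventually hδ.2,
    (tendsto_neg_atTop_atBot.comp tendsto_sqrt_atTop).eventually hδ.1, eventually_gt_atTop 0]
    with t hpos hneg ht
  have hsq : √t ^ 2 = t := sq_sqrt ht.le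
  simp only [Function.comp_apply, neg_sq, hsq] at hpos hneg
  rw [abs_of_pos ht]
  exact le_min ((le_div_iff₀ ht).mp hpos) ((le_div_iff₀ ht).mp hneg)

lemma Hfun_pos (hF : 0 ≤ F) (hFc : Continuous F) (hFpos : ∀ t, t ≠ 0 → 0 < F t) {δ : ℝ}
    (hδ : 0 < δ) (hδF : ∀ᶠ s in atBot ⊔ atTop, δ ≤ F s / s ^ 2) {t : ℝ} (ht : 0 < t) :
    0 < Hfun F t := by
  refine convexEnvelope_pos (Ftilde_sqrt_abs_nonneg hF) ?_ (fun x hx => ?_) hδ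
    (eventually_mul_le_Ftilde_sqrt hδF) ht
  · exact ((hFc.comp continuous_abs.sqrt).min (hFc.comp continuous_abs.sqrt.neg)).continuousOn
  · have hx' : √|x| ≠ 0 := (sqrt_pos.mpr (abs_pos.mpr hx.ne')).ne'
    exact lt_min (hFpos _ hx') (hFpos _ (neg_ne_zero.mpr hx'))

lemma tendsto_Hfun_div_self (hF : 0 ≤ F) (hsmall : F =o[𝓝 0] (· ^ 2)) :
    Tendsto (fun t => Hfun F t / t) (𝓝 0) (𝓝 0) := by
  have hsqrt : Tendsto (fun t : ℝ => √|t|) (𝓝 0) (𝓝 0) := by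
    simpa using continuous_abs.sqrt.tendsto (0 : ℝ)
  have hFsqrt : (fun t => F √|t|) =o[𝓝 0] id :=
    (hsmall.comp_tendsto hsqrt).trans_isBigO
      (isBigO_of_le _ fun t => by simp [sq_sqrt (abs_nonneg t)])
  refine (IsBigO.trans_isLittleO (isBigO_of_le _ fun t => ?_) hFsqrt).tendsto_div_nhds_zero
  rw [norm_of_nonneg (Hfun_nonneg hF t), norm_of_nonneg (hF _)]
  exact (Hfun_le hF t).trans (min_le_left _ _)

-- Lean's `x / 0 = 0` makes the case split in `phiFun` redundant.
lemma phiFun_eq_div : phiFun F = fun t => Hfun F t / t := by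
  ext t
  by_cases ht : t = 0 <;> simp [phiFun, ht]

end Envelope

/-- Let `F` be `C²` with `F(t) > F(0) = 0` for `t ≠ 0`,
`liminf_{|t|→∞} F(t)/t² > 0` and `F''(0) = 0`. Then `H` is an even convex function, and
`φ` is continuous and strictly increasing on `ℝ`. -/
theorem stmt15 (F : ℝ → ℝ) (hF : ContDiff ℝ 2 F) (hF0 : F 0 = 0)
    (hargmin : ∀ t : ℝ, t ≠ 0 → F 0 < F t)
    (hliminf : 0 < Filter.liminf (fun t : ℝ => F t / t ^ 2) (Filter.atBot ⊔ Filter.atTop))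
    (hF'' : iteratedDeriv 2 F 0 = 0) :
    (∀ t : ℝ, Hfun F (-t) = Hfun F t) ∧
    ConvexOn ℝ Set.univ (Hfun F) ∧
    Continuous (phiFun F) ∧
    StrictMono (phiFun F) := by
  have hFpos : ∀ t, t ≠ 0 → 0 < F t := fun t ht => hF0 ▸ hargmin t ht
  have hFnn : 0 ≤ F := fun t => by
    rcases eq_or_ne t 0 with rfl | ht
    exacts [hF0.ge, (hFpos t ht).le]
  have hF'0 : deriv F 0 = 0 := IsLocalMin.deriv_eq_zero (.of_forall fun t => hF0.trans_le (hFnn t))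
  have hlim := tendsto_Hfun_div_self hFnn (isLittleO_sq_of_contDiff_two hF hF0 hF'0 hF'')
  obtain ⟨δ, hδ, hδF⟩ := exists_pos_eventually_le_of_liminf_pos hliminf
  have hconv := convexOn_Hfun hFnn
  rw [phiFun_eq_div]
  refine ⟨Hfun_neg hFnn, hconv, hconv.continuous_div_self hlim,
    strictMono_of_odd_strictMonoOn_nonneg (fun t => by rw [Hfun_neg hFnn, div_neg]) ?_⟩
  exact hconv.strictMonoOn_div_self (Hfun_zero hFnn hF0)
    (fun t ht => Hfun_pos hFnn hF.continuous hFpos hδ hδF ht) (hlim.mono_left nhdsWithin_le_nhds)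
end
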